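/- arXiv:2403.07094 — 4 statements merged into one kernel-verified Lean document; each statement's English description precedes it below -/
import Mathlib

section
/- For fixed λ₂ ≥ 0, the function λ₁ ↦ D(λ₁, λ₂) = Sλ₁ + Fλ₂ + ∑ᵢ max{Iᵢ − λ₁ − fᵢλ₂, 0} with 1 ≤ S ≤ p an integer is minimized over λ₁ ≥ 0 at λ₁* = max{(I − λ₂f)₍S₎, 0}, where (I − λ₂f)₍S₎ denotes the S-th largest entry of the vector with entries Iᵢ − λ₂fᵢ. -/
/-- The k-th largest entry (1-indexed) of a vector. -/
noncomputable def kthLargest {p : ℕ} (v : Fin p → ℝ) (k : ℕ) : ℝ :=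
  ((List.ofFn v).insertionSort (· ≥ ·)).getD (k - 1) 0

private lemma map_sub_sum (l : List ℝ) (g1 g2 : ℝ → ℝ) :
    (l.map fun x => g1 x - g2 x).sum = (l.map g1).sum - (l.map g2).sum := by
  induction l with
  | nil => simp
  | cons a l ih => simp [ih]; ring

/-- For fixed λ₂ ≥ 0, λ₁ ↦ D(λ₁, λ₂) is minimized over λ₁ ≥ 0 at
    λ₁* = max{(I − λ₂ f)₍S₎, 0}. -/
theorem dual_inner_minimizer (p : ℕ) (hp : 0 < p) (I f : Fin p → ℝ) (F : ℝ)
    (S : ℕ) (hS1 : 1 ≤ S) (hSp : S ≤ p) (l2 : ℝ) (hl2 : 0 ≤ l2)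
    (D : ℝ → ℝ → ℝ)
    (hD : ∀ l1 l2', D l1 l2' = S * l1 + F * l2' + ∑ i, max (I i - l1 - f i * l2') 0) :
    let l1star := max (kthLargest (fun i => I i - l2 * f i) S) 0
    0 ≤ l1star ∧ ∀ l1 : ℝ, 0 ≤ l1 → D l1star l2 ≤ D l1 l2 := by
  intro l1star
  refine ⟨le_max_right _ _, ?_⟩
  set v : Fin p → ℝ := fun i => I i - l2 * f i with hv
  set L : List ℝ := (List.ofFn v).insertionSort (· ≥ ·) with hLdef
  have hlen : L.length = p := by
    rw [hLdef, List.length_insertionSort, List.length_ofFn]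
  have hsort : L.Pairwise (· ≥ ·) := List.pairwise_insertionSort _ _
  have hS1p : S - 1 < p := by omega
  set c : ℝ := kthLargest v S with hcdef
  have hcL : c = L.get ⟨S - 1, by omega⟩ := by
    rw [hcdef, kthLargest, List.get_eq_getElem, List.getD_eq_getElem?_getD,
      List.getElem?_eq_getElem (by
        simp only [List.length_insertionSort, List.length_ofFn]; omega)]
    rfl
  -- convert Fin sums to list sums
  have hsum : ∀ g : ℝ → ℝ, ∑ i, g (v i) = (L.map g).sum := by
    intro g
    have h1 : (List.ofFn fun i => g (v i)).sum = ∑ i, g (v i) := List.sum_ofFn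
    have h2 : (List.ofFn fun i => g (v i)) = (List.ofFn v).map g := by
      rw [List.map_ofFn]; rfl
    rw [← h1, h2]
    exact (((List.perm_insertionSort (· ≥ ·) (List.ofFn v)).map g).sum_eq).symm
  have hsum' : ∀ s : ℝ, ∑ i, max (I i - s - f i * l2) 0
      = (L.map fun x => max (x - s) 0).sum := by
    intro s
    rw [← hsum]
    refine Finset.sum_congr rfl fun i _ => ?_
    have : I i - s - f i * l2 = v i - s := by simp [hv]; ring
    rw [this]
  have hsplit : ∀ (g : ℝ → ℝ) (k : ℕ),
      (L.map g).sum = ((L.take k).map g).sum + ((L.drop k).map g).sum := by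
    intro g k
    rw [← List.sum_append, ← List.map_append, List.take_append_drop]
  -- sorted facts
  have fact1 : ∀ x ∈ L.take S, c ≤ x := by
    intro x hx
    rw [List.mem_take_iff_getElem] at hx
    obtain ⟨i, hi, rfl⟩ := hx
    have := hsort.rel_get_of_le (a := ⟨i, by omega⟩) (b := ⟨S - 1, by omega⟩)
      (by simp only [Fin.mk_le_mk]; omega)
    rw [hcL]
    simpa using this
  have fact2 : ∀ y ∈ L.drop (S - 1), y ≤ c := by
    intro y hy
    rw [List.mem_drop_iff_getElem] at hy
    obtain ⟨i, hi, rfl⟩ := hy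
    have := hsort.rel_get_of_le (a := ⟨S - 1, by omega⟩) (b := ⟨S - 1 + i, by omega⟩)
      (by simp only [Fin.mk_le_mk]; omega)
    rw [hcL]
    simpa using this
  have hScast : (1 : ℝ) ≤ (S : ℝ) := by exact_mod_cast hS1
  intro t ht
  rw [hD, hD, hsum', hsum']
  have hstar : l1star = max c 0 := rfl
  rcases le_or_gt l1star t with hcase | hcase
  · -- t ≥ l1star
    have hkey : (L.map fun x => max (x - l1star) 0).sum
        - (L.map fun x => max (x - t) 0).sum ≤ ((S : ℝ) - 1) * (t - l1star) := by
      rw [← map_sub_sum]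
      rw [hsplit _ (S - 1)]
      have hdrop : (((L.drop (S - 1)).map fun x =>
          max (x - l1star) 0 - max (x - t) 0)).sum = 0 := by
        apply List.sum_eq_zero
        intro z hz
        obtain ⟨y, hy, rfl⟩ := List.mem_map.1 hz
        have hyc : y ≤ c := fact2 y hy
        have hyl : y ≤ l1star := hyc.trans (by rw [hstar]; exact le_max_left _ _)
        have hyt : y ≤ t := hyl.trans hcase
        rw [max_eq_right (by linarith), max_eq_right (by linarith)]
        ring
      have htake : (((L.take (S - 1)).map fun x =>
          max (x - l1star) 0 - max (x - t) 0)).sum ≤ ((S : ℝ) - 1) * (t - l1star) := by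
        have hb : ∀ z ∈ ((L.take (S - 1)).map fun x =>
            max (x - l1star) 0 - max (x - t) 0), z ≤ t - l1star := by
          intro z hz
          obtain ⟨y, _, rfl⟩ := List.mem_map.1 hz
          rw [max_def, max_def]
          split_ifs <;> linarith
        calc (((L.take (S - 1)).map fun x => max (x - l1star) 0 - max (x - t) 0)).sum
            ≤ (((L.take (S - 1)).map fun x =>
                max (x - l1star) 0 - max (x - t) 0)).length • (t - l1star) :=
              List.sum_le_card_nsmul _ _ hb
          _ ≤ ((S : ℝ) - 1) * (t - l1star) := by
              rw [List.length_map, List.length_take, nsmul_eq_mul]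
              apply mul_le_mul_of_nonneg_right _ (by linarith)
              push_cast [Nat.cast_sub hS1]
              exact min_le_left _ _
      linarith
    nlinarith [hkey, sub_nonneg.2 hcase]
  · -- t < l1star, so l1star = c > 0
    have hc0 : 0 < c := by
      by_contra h
      push_neg at h
      have : l1star = 0 := by rw [hstar, max_eq_right h]
      linarith
    have hl1c : l1star = c := by rw [hstar, max_eq_left hc0.le]
    have htc : t < c := hl1c ▸ hcase
    have hkey : (S : ℝ) * (l1star - t) ≤ (L.map fun x => max (x - t) 0).sum
        - (L.map fun x => max (x - l1star) 0).sum := by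
      rw [← map_sub_sum]
      rw [hsplit _ S]
      have hdrop : 0 ≤ (((L.drop S).map fun x =>
          max (x - t) 0 - max (x - l1star) 0)).sum := by
        apply List.sum_nonneg
        intro z hz
        obtain ⟨y, _, rfl⟩ := List.mem_map.1 hz
        rw [max_def, max_def]
        split_ifs <;> linarith
      have htake : (S : ℝ) * (l1star - t) ≤ (((L.take S).map fun x =>
          max (x - t) 0 - max (x - l1star) 0)).sum := by
        have hb : ∀ z ∈ ((L.take S).map fun x =>
            max (x - t) 0 - max (x - l1star) 0), l1star - t ≤ z := by
          intro z hz
          obtain ⟨y, hy, rfl⟩ := List.mem_map.1 hz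
          have hyc : c ≤ y := fact1 y hy
          have hyl : l1star ≤ y := hl1c ▸ hyc
          have h1 : max (y - t) 0 = y - t := max_eq_left (by linarith)
          have h2 : max (y - l1star) 0 = y - l1star := max_eq_left (by linarith)
          rw [h1, h2]
          linarith
        calc (S : ℝ) * (l1star - t)
            = (((L.take S).map fun x =>
                max (x - t) 0 - max (x - l1star) 0)).length • (l1star - t) := by
              rw [List.length_map, List.length_take, nsmul_eq_mul, hlen,
                Nat.min_eq_left hSp]
          _ ≤ _ := List.card_nsmul_le_sum _ _ hb
      linarith
    linarith
end

section
/- Consider the projection problem min over x of ‖x − x̄‖² subject to ‖x‖₀ ≤ S and ∑ᵢ fᵢ·1[xᵢ ≠ 0] ≤ F. If z* ∈ {0,1}ᵖ solves the integer program maximize ∑ᵢ x̄ᵢ² zᵢ subject to ∑ᵢ fᵢ zᵢ ≤ F and ∑ᵢ zᵢ ≤ S, then the vector x defined by xᵢ = x̄ᵢ z*ᵢ is an optimal solution of the projection problem. -/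
open Finset in
/-- Solving the ILP with Iᵢ = x̄ᵢ² yields an optimal solution of the projection
    problem under NNZ and FLOP constraints. -/
theorem projection_from_ILP (p : ℕ) (xbar f : Fin p → ℝ) (hf : ∀ i, 0 ≤ f i)
    (S : ℕ) (F : ℝ) (hF : 0 ≤ F)
    (zstar : Fin p → ℝ) (hbin : ∀ i, zstar i = 0 ∨ zstar i = 1)
    (hfeasF : ∑ i, f i * zstar i ≤ F) (hfeasS : ∑ i, zstar i ≤ (S : ℝ))
    (hopt : ∀ z : Fin p → ℝ, (∀ i, z i = 0 ∨ z i = 1) →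
      ∑ i, f i * z i ≤ F → ∑ i, z i ≤ (S : ℝ) →
      ∑ i, xbar i ^ 2 * z i ≤ ∑ i, xbar i ^ 2 * zstar i) :
    let x : Fin p → ℝ := fun i => xbar i * zstar i
    ((univ.filter (fun i => x i ≠ 0)).card ≤ S ∧
      ∑ i ∈ univ.filter (fun i => x i ≠ 0), f i ≤ F) ∧
    ∀ y : Fin p → ℝ,
      (univ.filter (fun i => y i ≠ 0)).card ≤ S →
      ∑ i ∈ univ.filter (fun i => y i ≠ 0), f i ≤ F →
      ∑ i, (x i - xbar i) ^ 2 ≤ ∑ i, (y i - xbar i) ^ 2 := by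
  intro x
  have hz0 : ∀ i, 0 ≤ zstar i := fun i => by rcases hbin i with h | h <;> simp [h]
  have hone : ∀ i, x i ≠ 0 → zstar i = 1 := by
    intro i hi
    rcases hbin i with h | h
    · exact absurd (by simp [x, h]) hi
    · exact h
  refine ⟨⟨?_, ?_⟩, ?_⟩
  · have h1 : ((univ.filter (fun i => x i ≠ 0)).card : ℝ) ≤ (S : ℝ) := by
      calc ((univ.filter (fun i => x i ≠ 0)).card : ℝ)
          = ∑ i ∈ univ.filter (fun i => x i ≠ 0), (1 : ℝ) := by simp
        _ = ∑ i ∈ univ.filter (fun i => x i ≠ 0), zstar i := by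
            refine Finset.sum_congr rfl fun i hi => ?_
            simp only [mem_filter] at hi
            rw [hone i hi.2]
        _ ≤ ∑ i, zstar i := Finset.sum_le_sum_of_subset_of_nonneg (filter_subset _ _)
            (fun i _ _ => hz0 i)
        _ ≤ (S : ℝ) := hfeasS
    exact_mod_cast h1
  · calc ∑ i ∈ univ.filter (fun i => x i ≠ 0), f i
        = ∑ i ∈ univ.filter (fun i => x i ≠ 0), f i * zstar i := by
          refine Finset.sum_congr rfl fun i hi => ?_
          simp only [mem_filter] at hi
          rw [hone i hi.2, mul_one]
      _ ≤ ∑ i, f i * zstar i := Finset.sum_le_sum_of_subset_of_nonneg (filter_subset _ _)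
          (fun i _ _ => mul_nonneg (hf i) (hz0 i))
      _ ≤ F := hfeasF
  · intro y hyS hyF
    set z : Fin p → ℝ := fun i => if y i ≠ 0 then 1 else 0 with hzdef
    have hzbin : ∀ i, z i = 0 ∨ z i = 1 := fun i => by
      by_cases h : y i ≠ 0 <;> simp [z, h]
    have hzF : ∑ i, f i * z i ≤ F := by
      calc ∑ i, f i * z i = ∑ i ∈ univ.filter (fun i => y i ≠ 0), f i := by
            rw [Finset.sum_filter]
            refine Finset.sum_congr rfl fun i _ => ?_
            by_cases h : y i ≠ 0 <;> simp [z, h]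
        _ ≤ F := hyF
    have hzS : ∑ i, z i ≤ (S : ℝ) := by
      have : ∑ i, z i = ((univ.filter (fun i => y i ≠ 0)).card : ℝ) := by
        simp [z, Finset.sum_ite, Finset.sum_filter]
      rw [this]
      exact_mod_cast hyS
    have key := hopt z hzbin hzF hzS
    have hx : ∑ i, (x i - xbar i) ^ 2 = ∑ i, xbar i ^ 2 * (1 - zstar i) := by
      refine Finset.sum_congr rfl fun i _ => ?_
      rcases hbin i with h | h <;> simp [x, h] <;> ring
    have hy : ∑ i, xbar i ^ 2 * (1 - z i) ≤ ∑ i, (y i - xbar i) ^ 2 := by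
      refine Finset.sum_le_sum fun i _ => ?_
      by_cases h : y i ≠ 0
      · have hz1 : z i = 1 := by simp [z, h]
        rw [hz1]
        have : (0:ℝ) ≤ (y i - xbar i) ^ 2 := sq_nonneg _
        nlinarith
      · push_neg at h
        simp [z, h]
    have expand : ∀ w : Fin p → ℝ, ∑ i, xbar i ^ 2 * (1 - w i)
        = ∑ i, xbar i ^ 2 - ∑ i, xbar i ^ 2 * w i := by
      intro w
      rw [← Finset.sum_sub_distrib]
      refine Finset.sum_congr rfl fun i _ => by ring
    rw [hx]
    calc ∑ i, xbar i ^ 2 * (1 - zstar i)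
        = ∑ i, xbar i ^ 2 - ∑ i, xbar i ^ 2 * zstar i := expand zstar
      _ ≤ ∑ i, xbar i ^ 2 - ∑ i, xbar i ^ 2 * z i := by linarith
      _ = ∑ i, xbar i ^ 2 * (1 - z i) := (expand z).symm
      _ ≤ ∑ i, (y i - xbar i) ^ 2 := hy
end

section
/- In the recursive partition step of the multi-array selection algorithm, the number of retained elements ∑ⱼ |uⱼ| ≥ p/4: given L sorted arrays with total length p, with aⱼ the median of array vⱼ, σ a permutation with a_{σ₁} ≥ ⋯ ≥ a_{σ_L}, t the smallest index with ∑_{j≤t} |v_{σⱼ}| ≥ p/2, and uⱼ = {a ∈ vⱼ : a ≥ a_{σ_t}}, it holds that ∑ⱼ₌₁^L |uⱼ| ≥ p/4. -/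
open Finset in
/-- Partition lemma for the multi-array selection algorithm: the retained upper
    parts have total size at least p/4. -/
theorem partition_upper_bound (L p : ℕ) (hL : 0 < L) (hp : 1 ≤ p)
    (v : Fin L → Multiset ℝ) (hsize : ∀ j, 1 ≤ (v j).card)
    (htotal : ∑ j, (v j).card = p)
    (a : Fin L → ℝ)
    (hmed : ∀ j, (v j).card ≤ 2 * ((v j).filter (fun x => a j ≤ x)).card)
    (σ : Equiv.Perm (Fin L))
    (hsorted : ∀ j k : Fin L, j ≤ k → a (σ k) ≤ a (σ j))
    (t : Fin L) (ht : p ≤ 2 * ∑ j ∈ Finset.Iic t, (v (σ j)).card)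
    (htmin : ∀ t' : Fin L, t' < t → 2 * ∑ j ∈ Finset.Iic t', (v (σ j)).card < p) :
    p ≤ 4 * ∑ j, ((v j).filter (fun x => a (σ t) ≤ x)).card := by
  have key : ∀ i ∈ Finset.Iic t,
      (v (σ i)).card ≤ 2 * ((v (σ i)).filter (fun x => a (σ t) ≤ x)).card := by
    intro i hi
    refine le_trans (hmed (σ i)) ?_
    have h1 : a (σ t) ≤ a (σ i) := hsorted i t (Finset.mem_Iic.mp hi)
    have h2 : (v (σ i)).filter (fun x => a (σ i) ≤ x) ≤
        (v (σ i)).filter (fun x => a (σ t) ≤ x) :=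
      Multiset.monotone_filter_right _ (fun x hx => le_trans h1 hx)
    exact Nat.mul_le_mul_left _ (Multiset.card_le_card h2)
  have h3 : ∑ i ∈ Finset.Iic t, (v (σ i)).card ≤
      ∑ i ∈ Finset.Iic t, 2 * ((v (σ i)).filter (fun x => a (σ t) ≤ x)).card :=
    Finset.sum_le_sum key
  have h4 : ∑ i ∈ Finset.Iic t, ((v (σ i)).filter (fun x => a (σ t) ≤ x)).card ≤
      ∑ i, ((v (σ i)).filter (fun x => a (σ t) ≤ x)).card :=
    Finset.sum_le_sum_of_subset (Finset.subset_univ _)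
  have h5 : ∑ i, ((v (σ i)).filter (fun x => a (σ t) ≤ x)).card =
      ∑ j, ((v j).filter (fun x => a (σ t) ≤ x)).card :=
    Equiv.sum_comp σ (fun j => ((v j).filter (fun x => a (σ t) ≤ x)).card)
  calc p ≤ 2 * ∑ j ∈ Finset.Iic t, (v (σ j)).card := ht
    _ ≤ 2 * ∑ i ∈ Finset.Iic t, 2 * ((v (σ i)).filter (fun x => a (σ t) ≤ x)).card :=
        Nat.mul_le_mul_left _ h3
    _ = 4 * ∑ i ∈ Finset.Iic t, ((v (σ i)).filter (fun x => a (σ t) ≤ x)).card := by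
        rw [← Finset.mul_sum]; ring
    _ ≤ 4 * ∑ j, ((v j).filter (fun x => a (σ t) ≤ x)).card := by
        rw [← h5]; exact Nat.mul_le_mul_left _ h4
end

section
/- Symmetric half of the partition lemma: with the same setup, letting sⱼ = {a ∈ vⱼ : a ≤ a_{σ_t}}, it holds that ∑ⱼ₌₁^L |sⱼ| ≥ p/4. -/
open Finset in
/-- Symmetric half of the partition lemma: the retained lower parts have total
    size at least p/4. -/
theorem partition_lower_bound (L p : ℕ) (hL : 0 < L) (hp : 1 ≤ p)
    (v : Fin L → Multiset ℝ) (hsize : ∀ j, 1 ≤ (v j).card)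
    (htotal : ∑ j, (v j).card = p)
    (a : Fin L → ℝ)
    (hmed : ∀ j, (v j).card ≤ 2 * ((v j).filter (fun x => x ≤ a j)).card)
    (σ : Equiv.Perm (Fin L))
    (hsorted : ∀ j k : Fin L, j ≤ k → a (σ k) ≤ a (σ j))
    (t : Fin L) (ht : p ≤ 2 * ∑ j ∈ Finset.Iic t, (v (σ j)).card)
    (htmin : 2 * ∑ j ∈ Finset.Iio t, (v (σ j)).card < p) :
    p ≤ 4 * ∑ j, ((v j).filter (fun x => x ≤ a (σ t))).card := by
  classical
  set g : Fin L → ℕ := fun j => ((v j).filter (fun x => x ≤ a (σ t))).card with hg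
  set F := ∑ j, g j with hF
  set S := ∑ j ∈ Finset.Iio t, (v (σ j)).card with hS
  have hsplit : ∑ j ∈ Finset.univ \ Finset.Iio t, (v (σ j)).card + S = p := by
    rw [hS, Finset.sum_sdiff (Finset.subset_univ _)]
    rw [← htotal]
    exact Equiv.sum_comp σ (fun j => (v j).card)
  -- each term in the complement satisfies card ≤ 2 * filtered card
  have hterm : ∀ j ∈ Finset.univ \ Finset.Iio t,
      (v (σ j)).card ≤ 2 * g (σ j) := by
    intro j hj
    simp only [Finset.mem_sdiff, Finset.mem_Iio, not_lt] at hj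
    have hja : a (σ j) ≤ a (σ t) := hsorted t j hj.2
    have hmono : ((v (σ j)).filter (fun x => x ≤ a (σ j))).card ≤ g (σ j) := by
      apply Multiset.card_le_card
      apply Multiset.monotone_filter_right
      intro x hx
      exact le_trans hx hja
    calc (v (σ j)).card ≤ 2 * ((v (σ j)).filter (fun x => x ≤ a (σ j))).card := hmed _
      _ ≤ 2 * g (σ j) := by omega
  have hsum1 : ∑ j ∈ Finset.univ \ Finset.Iio t, (v (σ j)).card
      ≤ 2 * ∑ j ∈ Finset.univ \ Finset.Iio t, g (σ j) := by
    rw [Finset.mul_sum]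
    exact Finset.sum_le_sum hterm
  have hsum2 : ∑ j ∈ Finset.univ \ Finset.Iio t, g (σ j) ≤ F := by
    calc ∑ j ∈ Finset.univ \ Finset.Iio t, g (σ j)
        ≤ ∑ j, g (σ j) := Finset.sum_le_sum_of_subset (Finset.subset_univ _)
      _ = F := Equiv.sum_comp σ g
  omega
end
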